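/- Let r ∈ (0.15, 0.85), α ∈ (0,1), β ∈ (0.03, 0.5) with α ≤ β, and set a = Φ⁻¹(α), b = Φ⁻¹(β). Then Φ((b − √r·a)/√(1−r)) ≥ (1/(2√r))·φ₂(a, b; √r); equivalently, the local prediction-access ratio satisfies lim_{Δ→0} PAR(α, β, Δ) ≥ 1. -/

import Mathlib

open Real MeasureTheory Filter Topology
open Set

/-- The standard normal density φ(x) = (2π)^{-1/2} exp(-x²/2). -/
noncomputable def stdNormalPDF (x : ℝ) : ℝ :=
  (Real.sqrt (2 * Real.pi))⁻¹ * Real.exp (-x ^ 2 / 2)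

/-- The standard normal CDF Φ(x) = ∫_{-∞}^x φ(u) du. -/
noncomputable def stdNormalCDF (x : ℝ) : ℝ :=
  ∫ u in Set.Iic x, stdNormalPDF u

/-- The standard bivariate normal density with correlation ρ. -/
noncomputable def biNormalPDF (x y ρ : ℝ) : ℝ :=
  (2 * Real.pi * Real.sqrt (1 - ρ ^ 2))⁻¹ *
    Real.exp (-(x ^ 2 - 2 * ρ * x * y + y ^ 2) / (2 * (1 - ρ ^ 2)))

/-- The standard bivariate normal CDF Φ₂(a, b; ρ). -/
noncomputable def biNormalCDF (a b ρ : ℝ) : ℝ :=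
  ∫ x in Set.Iic a, ∫ y in Set.Iic b, biNormalPDF x y ρ

/-- The inverse Φ⁻¹ of the standard normal CDF on (0,1). -/
noncomputable def stdNormalCDFInv (p : ℝ) : ℝ :=
  Function.invFun stdNormalCDF p

lemma pdf_pos (x : ℝ) : 0 < stdNormalPDF x := by
  unfold stdNormalPDF
  positivity

lemma pdf_cont : Continuous stdNormalPDF := by
  unfold stdNormalPDF
  continuity

lemma sqrt_two_pi_pos : 0 < Real.sqrt (2 * Real.pi) :=
  Real.sqrt_pos.2 (by positivity)

lemma pdf_integrable : Integrable stdNormalPDF := by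
  unfold stdNormalPDF
  apply Integrable.const_mul
  have := integrable_exp_neg_mul_sq (b := (1/2 : ℝ)) (by norm_num)
  convert this using 2 with x
  ring_nf

lemma integral_pdf : ∫ x, stdNormalPDF x = 1 := by
  unfold stdNormalPDF
  rw [integral_const_mul]
  have := integral_gaussian (1/2 : ℝ)
  have h2 : ∫ x : ℝ, Real.exp (-x ^ 2 / 2) = Real.sqrt (2 * Real.pi) := by
    rw [show (2 * Real.pi) = Real.pi / (1/2) by ring, ← this]
    congr 1 with x
    ring_nf
  rw [h2, inv_mul_cancel₀ (ne_of_gt sqrt_two_pi_pos)]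

lemma pdf_even (x : ℝ) : stdNormalPDF (-x) = stdNormalPDF x := by
  unfold stdNormalPDF; ring_nf

lemma cdf_zero : stdNormalCDF 0 = 1/2 := by
  have hsym : stdNormalCDF 0 = ∫ x in Set.Ioi (0:ℝ), stdNormalPDF x := by
    unfold stdNormalCDF
    rw [show ∫ u in Set.Iic (0:ℝ), stdNormalPDF u = ∫ u in Set.Iic (0:ℝ), stdNormalPDF (-u) from by
      apply setIntegral_congr_fun measurableSet_Iic; intro x _; simp [pdf_even]]
    rw [integral_comp_neg_Iic]
    norm_num
  have hsplit : stdNormalCDF 0 + ∫ x in Set.Ioi (0:ℝ), stdNormalPDF x = 1 := by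
    unfold stdNormalCDF
    rw [← integral_pdf, ← setIntegral_union (by simp [Set.disjoint_left])
      measurableSet_Ioi pdf_integrable.integrableOn pdf_integrable.integrableOn]
    rw [Set.Iic_union_Ioi]
    simp [Measure.restrict_univ]
  rw [hsym] at hsplit ⊢
  linarith

lemma cdf_add (x y : ℝ) (h : x ≤ y) :
    stdNormalCDF y = stdNormalCDF x + ∫ u in Set.Ioc x y, stdNormalPDF u := by
  unfold stdNormalCDF
  rw [← setIntegral_union (by simp [Set.disjoint_left]; intro a ha h2 ; linarith)
    measurableSet_Ioc pdf_integrable.integrableOn pdf_integrable.integrableOn,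
    Set.Iic_union_Ioc_eq_Iic h]

lemma cdf_mono : StrictMono stdNormalCDF := by
  intro x y hxy
  have := cdf_add x y hxy.le
  have hpos : 0 < ∫ u in Set.Ioc x y, stdNormalPDF u := by
    rw [← intervalIntegral.integral_of_le hxy.le]
    exact intervalIntegral.intervalIntegral_pos_of_pos
      (pdf_cont.intervalIntegrable x y) (fun u => pdf_pos u) hxy
  linarith

lemma cdf_pos (x : ℝ) : 0 < stdNormalCDF x := by
  unfold stdNormalCDF
  apply setIntegral_pos_iff_support_of_nonneg_ae ?_ pdf_integrable.integrableOn |>.2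
  · simp only [Function.support, ne_eq]
    have : {u | stdNormalPDF u ≠ 0} = Set.univ := by
      ext u; simp [ne_of_gt (pdf_pos u)]
    rw [this, Set.univ_inter]
    simp [Real.volume_Iic]
  · filter_upwards with u using (pdf_pos u).le

lemma cdf_neg_eq (x : ℝ) : stdNormalCDF (-x) = ∫ u in Set.Ioi x, stdNormalPDF u := by
  unfold stdNormalCDF
  rw [show ∫ u in Set.Iic (-x), stdNormalPDF u = ∫ u in Set.Iic (-x), stdNormalPDF (-u) from by
    apply setIntegral_congr_fun measurableSet_Iic; intro u _; simp [pdf_even]]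
  rw [integral_comp_neg_Iic]
  norm_num

lemma u_pdf_integrable : Integrable (fun u => u * stdNormalPDF u) := by
  unfold stdNormalPDF
  have := (integrable_mul_exp_neg_mul_sq (b := (1/2:ℝ)) (by norm_num)).const_mul
    ((Real.sqrt (2 * Real.pi))⁻¹)
  convert this using 2 with u
  ring_nf

lemma integral_u_pdf (x : ℝ) : ∫ u in Set.Ioi x, u * stdNormalPDF u = stdNormalPDF x := by
  have hderiv : ∀ u ∈ Set.Ici x, HasDerivAt (fun v => -stdNormalPDF v) (u * stdNormalPDF u) u := by
    intro u _
    unfold stdNormalPDF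
    have h1 : HasDerivAt (fun v : ℝ => -v ^ 2 / 2) (-u) u := by
      have := ((hasDerivAt_pow 2 u).neg).div_const 2
      exact this.congr_deriv (by push_cast; ring)
    have h2 := (h1.exp).const_mul ((Real.sqrt (2 * Real.pi))⁻¹)
    have h3 := h2.neg
    exact h3.congr_deriv (by ring)
  have hint : IntegrableOn (fun u => u * stdNormalPDF u) (Set.Ioi x) :=
    u_pdf_integrable.integrableOn
  have htend : Tendsto (fun v => -stdNormalPDF v) atTop (𝓝 0) := by
    rw [show (0:ℝ) = -0 by norm_num]
    apply Tendsto.neg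
    unfold stdNormalPDF
    rw [show (0:ℝ) = (Real.sqrt (2 * Real.pi))⁻¹ * 0 by ring]
    apply Tendsto.const_mul
    apply Real.tendsto_exp_atBot.comp
    have h5 : Tendsto (fun v : ℝ => v ^ 2 / 2) atTop atTop :=
      (tendsto_pow_atTop (by norm_num)).atTop_div_const (by norm_num)
    have h6 := tendsto_neg_atTop_atBot.comp h5
    apply h6.congr
    intro v; simp; ring
  have := integral_Ioi_of_hasDerivAt_of_tendsto' hderiv hint htend
  rw [this]; ring

lemma mills (x : ℝ) (hx : 0 < x) : stdNormalCDF (-x) ≤ stdNormalPDF x / x := by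
  rw [cdf_neg_eq]
  have h1 : ∫ u in Set.Ioi x, stdNormalPDF u ≤ ∫ u in Set.Ioi x, (u / x) * stdNormalPDF u := by
    apply setIntegral_mono_on
    · exact pdf_integrable.integrableOn
    · have : (fun u => (u / x) * stdNormalPDF u) = (fun u => (u * stdNormalPDF u) / x) := by
        funext u; ring
      rw [this]
      exact u_pdf_integrable.integrableOn.div_const x
    · exact measurableSet_Ioi
    · intro u hu
      have hux : x ≤ u := le_of_lt hu
      have h2 : 1 ≤ u / x := (one_le_div hx).2 hux
      nlinarith [pdf_pos u]
  have h2 : ∫ u in Set.Ioi x, (u / x) * stdNormalPDF u = stdNormalPDF x / x := by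
    rw [show (fun u => (u / x) * stdNormalPDF u) = (fun u => x⁻¹ * (u * stdNormalPDF u)) from by
      funext u; field_simp]
    rw [integral_const_mul, integral_u_pdf]
    field_simp
  linarith [h1, h2.le]

lemma cdf_eq_primitive (y : ℝ) :
    stdNormalCDF y = stdNormalCDF 0 + ∫ u in (0:ℝ)..y, stdNormalPDF u := by
  rcases le_or_gt 0 y with h | h
  · rw [cdf_add 0 y h, intervalIntegral.integral_of_le h]
  · rw [cdf_add y 0 h.le, intervalIntegral.integral_symm, intervalIntegral.integral_of_le h.le]
    ring

lemma cdf_cont : Continuous stdNormalCDF := by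
  have := pdf_integrable.continuous_primitive (0:ℝ)
  have h2 : Continuous fun y => stdNormalCDF 0 + ∫ u in (0:ℝ)..y, stdNormalPDF u :=
    continuous_const.add this
  exact h2.congr fun y => (cdf_eq_primitive y).symm

lemma cdf_lt_half (x : ℝ) (hx : x < 0) : stdNormalCDF x < 1/2 := by
  rw [← cdf_zero]; exact cdf_mono hx

lemma cdf_tendsto_atBot : Tendsto stdNormalCDF atBot (𝓝 0) := by
  apply tendsto_of_tendsto_of_tendsto_of_le_of_le' (tendsto_const_nhds (x := (0:ℝ)))
    (h := fun x : ℝ => (Real.sqrt (2 * Real.pi))⁻¹ * (-x)⁻¹)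
  · have h1 : Tendsto (fun x : ℝ => -x) atBot atTop := tendsto_neg_atBot_atTop
    have h2 := (tendsto_inv_atTop_zero.comp h1).const_mul ((Real.sqrt (2 * Real.pi))⁻¹)
    simpa using h2
  · filter_upwards with x using (cdf_pos x).le
  · filter_upwards [eventually_lt_atBot (0:ℝ)] with x hx
    have hm := mills (-x) (by linarith)
    rw [neg_neg] at hm
    refine hm.trans ?_
    unfold stdNormalPDF
    rw [div_eq_mul_inv, mul_assoc]
    apply mul_le_mul_of_nonneg_left ?_ (by positivity)
    apply mul_le_of_le_one_left (inv_nonneg.2 (by linarith))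
    apply Real.exp_le_one_iff.2
    nlinarith

lemma cdf_surjOn (p : ℝ) (hp1 : 0 < p) (hp2 : p ≤ 1/2) : ∃ x, stdNormalCDF x = p := by
  have h0 : stdNormalCDF 0 = 1/2 := cdf_zero
  obtain ⟨x₀, hx₀⟩ : ∃ x₀, stdNormalCDF x₀ < p := by
    have := cdf_tendsto_atBot
    have := (this.eventually_lt_const hp1).exists
    exact this
  have hle : x₀ ≤ 0 := by
    by_contra h
    push_neg at h
    have := cdf_mono h
    rw [h0] at this
    linarith
  have := intermediate_value_Icc hle cdf_cont.continuousOn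
  have hmem : p ∈ Set.Icc (stdNormalCDF x₀) (stdNormalCDF 0) := ⟨hx₀.le, by rw [h0]; exact hp2⟩
  obtain ⟨x, _, hx⟩ := this hmem
  exact ⟨x, hx⟩

lemma exp_neg_le (x : ℝ) (hx : 0 ≤ x) : Real.exp (-x) ≤ 1 - x + x ^ 2 / 2 := by
  have h1 := Real.quadratic_le_exp_of_nonneg hx
  have h2 : 0 < Real.exp x := Real.exp_pos x
  rw [Real.exp_neg]
  rw [inv_le_iff_one_le_mul₀ h2]
  have h3 : 0 ≤ 1 - x + x^2/2 := by nlinarith [sq_nonneg (x-1)]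
  have h4 := mul_le_mul_of_nonneg_left h1 h3
  nlinarith [pow_two_nonneg (x^2)]

lemma cdf_lower (s : ℝ) (hs : 0 ≤ s) :
    1/2 - (Real.sqrt (2 * Real.pi))⁻¹ * (s - s^3/6 + s^5/40) ≤ stdNormalCDF (-s) := by
  have hadd := cdf_add (-s) 0 (by linarith)
  rw [cdf_zero] at hadd
  have hI : ∫ u in Set.Ioc (-s) 0, stdNormalPDF u
      ≤ (Real.sqrt (2 * Real.pi))⁻¹ * (s - s^3/6 + s^5/40) := by
    rw [← intervalIntegral.integral_of_le (by linarith : -s ≤ (0:ℝ))]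
    have hb : ∀ u ∈ Set.Icc (-s) (0:ℝ),
        stdNormalPDF u ≤ (Real.sqrt (2 * Real.pi))⁻¹ * (1 - u^2/2 + u^4/8) := by
      intro u _
      unfold stdNormalPDF
      apply mul_le_mul_of_nonneg_left ?_ (le_of_lt (by positivity))
      have := exp_neg_le (u^2/2) (by positivity)
      rw [show -u^2/2 = -(u^2/2) by ring]
      apply this.trans
      nlinarith [sq_nonneg u]
    have hFTC : ∫ u in (-s)..(0:ℝ), (Real.sqrt (2 * Real.pi))⁻¹ * (1 - u^2/2 + u^4/8)
        = (Real.sqrt (2 * Real.pi))⁻¹ * (s - s^3/6 + s^5/40) := by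
      have hd : ∀ u ∈ Set.uIcc (-s) (0:ℝ), HasDerivAt
          (fun v => (Real.sqrt (2 * Real.pi))⁻¹ * (v - v^3/6 + v^5/40))
          ((Real.sqrt (2 * Real.pi))⁻¹ * (1 - u^2/2 + u^4/8)) u := by
        intro u _
        have h1 : HasDerivAt (fun v : ℝ => v - v^3/6 + v^5/40)
            (1 - u^2/2 + u^4/8) u := by
          have := ((hasDerivAt_id u).sub ((hasDerivAt_pow 3 u).div_const 6)).add
            ((hasDerivAt_pow 5 u).div_const 40)
          exact this.congr_deriv (by push_cast; ring)
        exact h1.const_mul _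
      rw [intervalIntegral.integral_eq_sub_of_hasDerivAt hd (by apply Continuous.intervalIntegrable; fun_prop)]
      ring
    rw [← hFTC]
    apply intervalIntegral.integral_mono_on (by linarith)
      (pdf_cont.intervalIntegrable _ _)
      (by apply Continuous.intervalIntegrable; fun_prop) hb
  linarith

lemma inv_sqrt2pi_le : (Real.sqrt (2 * Real.pi))⁻¹ ≤ 0.399 := by
  have hpi := Real.pi_gt_d6
  have hs : (2.5066:ℝ) ≤ Real.sqrt (2 * Real.pi) := by
    rw [show (2.5066:ℝ) = Real.sqrt (2.5066^2) from (Real.sqrt_sq (by norm_num)).symm]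
    apply Real.sqrt_le_sqrt
    nlinarith
  rw [inv_eq_one_div, div_le_iff₀ sqrt_two_pi_pos]
  nlinarith

lemma cdf_neg_two : stdNormalCDF (-2) ≤ 0.0271 := by
  have h1 := mills 2 (by norm_num)
  have h2 : Real.exp (-2) ≤ 0.1354 := by
    have h3 : Real.exp (2:ℝ) = Real.exp 1 * Real.exp 1 := by
      rw [← Real.exp_add]; norm_num
    have h4 := Real.exp_one_gt_d9
    have h5 : (7.389:ℝ) ≤ Real.exp 2 := by nlinarith
    rw [Real.exp_neg]
    rw [inv_le_comm₀ (Real.exp_pos 2) (by norm_num)]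
    linarith
  have h6 : stdNormalPDF 2 ≤ 0.399 * 0.1354 := by
    unfold stdNormalPDF
    have := inv_sqrt2pi_le
    have h7 : (0:ℝ) < (Real.sqrt (2 * Real.pi))⁻¹ := by positivity
    have h8 : Real.exp (-(2:ℝ)^2/2) = Real.exp (-2) := by norm_num
    rw [h8]
    nlinarith [Real.exp_pos (-2:ℝ)]
  apply h1.trans
  rw [div_le_iff₀ (by norm_num : (0:ℝ) < 2)]
  nlinarith

lemma key_poly (s : ℝ) (h0 : 0 ≤ s) (h2 : s^2 ≤ 1.7689) :
    0.223 ≤ (1/2 - 0.399*(s - s^3/6 + s^5/40))*(1 + 1.13*s^2 + 0.638*s^4) := by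
  have hc : (0:ℝ) ≤ s^3 := by positivity
  have hL : 1/2 - 0.399*s + 0.0488*s^3 ≤ 1/2 - 0.399*(s - s^3/6 + s^5/40) := by
    nlinarith [mul_nonneg hc (sub_nonneg.2 h2)]
  have hD : (0:ℝ) < 1 + 1.13*s^2 + 0.638*s^4 := by positivity
  have hbase : 0.223 ≤ (1/2 - 0.399*s + 0.0488*s^3)*(1 + 1.13*s^2 + 0.638*s^4) := by
    nlinarith [sq_nonneg (s-1), sq_nonneg (s^2-1), sq_nonneg (s-0.5), mul_nonneg h0 (sq_nonneg s),
      sq_nonneg (s^2-s), mul_nonneg (mul_nonneg h0 h0) h0, sq_nonneg (s^2+s-1),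
      mul_nonneg (sub_nonneg.2 h2) h0, mul_nonneg (sub_nonneg.2 h2) (sq_nonneg s)]
  nlinarith [mul_le_mul_of_nonneg_right hL hD.le]

lemma step_c_le (ρ σ : ℝ) (hρσ : 0.357 ≤ ρ * σ) (hρ : 0 < ρ) (hσ : 0 < σ) :
    (1 / (2 * ρ)) * (2 * Real.pi * σ)⁻¹ ≤ 0.223 := by
  have hpi := Real.pi_gt_d6
  have h4 : (4.486:ℝ) ≤ (2 * ρ) * (2 * Real.pi * σ) := by nlinarith
  have hpos : (0:ℝ) < (2 * ρ) * (2 * Real.pi * σ) := by positivity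
  rw [one_div, ← mul_inv]
  rw [inv_le_comm₀ hpos (by norm_num)]
  linarith

lemma step_ha2 (ρ σ s a : ℝ) (hσsq : σ^2 = 1 - ρ^2) (hρlb : 0.387 ≤ ρ) (hρub : ρ ≤ 0.93)
    (hσ : 0 < σ) (hs : 0 < s) (hle : s * σ ≤ (-a) * (1 - ρ)) : 2.26 * s^2 ≤ a^2 := by
  have hsq : s^2 * σ^2 ≤ a^2 * (1-ρ)^2 := by nlinarith [mul_pos hs hσ]
  rw [hσsq] at hsq
  have hu : 0 < 1 - ρ := by linarith
  have h3 : s^2*(1+ρ) ≤ a^2*(1-ρ) := by nlinarith [mul_pos hu hu]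
  have h4 : 2.26*s^2*(1-ρ) ≤ s^2*(1+ρ) := by nlinarith [mul_nonneg (sq_nonneg s) (show (0:ℝ) ≤ 3.26*ρ - 1.26 by linarith)]
  nlinarith

lemma step_hs2 (ρ σ s : ℝ) (hσsq : σ^2 = 1 - ρ^2) (hρlb : 0.387 ≤ ρ) (hρub : ρ ≤ 0.93)
    (hσ : 0 < σ) (hs : 0 < s) (hle : s * σ ≤ 2 * (1 - ρ)) : s^2 ≤ 1.7689 := by
  have h2 : s^2 * σ^2 ≤ 4 * (1-ρ)^2 := by nlinarith [mul_pos hs hσ]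
  rw [hσsq] at h2
  nlinarith [sq_nonneg s]

lemma step_hDD (s a : ℝ) (ha2 : 2.26 * s^2 ≤ a^2) :
    1 + 1.13*s^2 + 0.638*s^4 ≤ 1 + a^2/2 + (a^2/2)^2/2 := by
  nlinarith [sq_nonneg s, sq_nonneg a, sq_nonneg (a^2 - 2.26*s^2)]

lemma step_hDa (a : ℝ) : Real.exp (-a^2/2) * (1 + a^2/2 + (a^2/2)^2/2) ≤ 1 := by
  have hq := Real.quadratic_le_exp_of_nonneg (x := a^2/2) (by positivity)
  have hp := Real.exp_pos (a^2/2)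
  rw [show -a^2/2 = -(a^2/2) by ring, Real.exp_neg]
  rw [inv_mul_le_iff₀ hp]
  linarith

lemma step_hP (s : ℝ) (hs0 : 0 ≤ s) (hs2 : s^2 ≤ 1.7689) : 0 ≤ s - s^3/6 + s^5/40 := by
  nlinarith [mul_le_mul_of_nonneg_left hs2 hs0, pow_nonneg hs0 5]

set_option maxHeartbeats 1000000 in
/-- The core analytic estimate, with all variables abstract. -/
lemma main_est (ρ σ a b : ℝ) (hσsq : σ^2 = 1 - ρ^2) (hρlb : 0.387 ≤ ρ) (hρub : ρ ≤ 0.93)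
    (hρσ : 0.357 ≤ ρ * σ) (hρpos : 0 < ρ) (hσpos : 0 < σ)
    (hab : a ≤ b) (hb0 : b < 0) (hb2 : -2 < b) :
    stdNormalCDF ((b - ρ * a) / σ) ≥
      (1 / (2 * ρ)) * ((2 * Real.pi * σ)⁻¹ * (Real.exp (-(((b - ρ*a)/σ))^2/2) * Real.exp (-a^2/2))) := by
  obtain ⟨t, ht⟩ : ∃ t, (b - ρ * a) / σ = t := ⟨_, rfl⟩
  rw [ht]
  have htσ : b - ρ * a = t * σ := by
    rw [← ht]; field_simp
  have hE1pos := Real.exp_pos (-t^2/2)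
  have hE2pos := Real.exp_pos (-a^2/2)
  have hE1le : Real.exp (-t^2/2) ≤ 1 := Real.exp_le_one_iff.2 (by nlinarith [sq_nonneg t])
  have hE2le : Real.exp (-a^2/2) ≤ 1 := Real.exp_le_one_iff.2 (by nlinarith [sq_nonneg a])
  have hcle := step_c_le ρ σ hρσ hρpos hσpos
  have hcpos : (0:ℝ) < (1 / (2 * ρ)) * (2 * Real.pi * σ)⁻¹ := by positivity
  rcases le_or_gt 0 t with hts | hts
  · have hΦ : (1:ℝ)/2 ≤ stdNormalCDF t := by
      rw [← cdf_zero]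
      exact cdf_mono.monotone hts
    have hEE : Real.exp (-t^2/2) * Real.exp (-a^2/2) ≤ Real.exp (-a^2/2) := by
      have := mul_le_mul_of_nonneg_right hE1le hE2pos.le
      linarith
    have hrhs : (1 / (2 * ρ)) * ((2 * Real.pi * σ)⁻¹ * (Real.exp (-t^2/2) * Real.exp (-a^2/2)))
        ≤ 0.223 := by
      rw [← mul_assoc]
      calc ((1 / (2 * ρ)) * (2 * Real.pi * σ)⁻¹) * (Real.exp (-t^2/2) * Real.exp (-a^2/2))
          ≤ ((1 / (2 * ρ)) * (2 * Real.pi * σ)⁻¹) * 1 := by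
            apply mul_le_mul_of_nonneg_left ?_ hcpos.le
            have := mul_le_mul_of_nonneg_right hE1le hE2pos.le
            nlinarith [hE2le]
        _ = (1 / (2 * ρ)) * (2 * Real.pi * σ)⁻¹ := mul_one _
        _ ≤ 0.223 := hcle
    exact le_trans hrhs (by linarith)
  · obtain ⟨s, hs⟩ : ∃ s, s = -t := ⟨_, rfl⟩
    have ht2 : t = -s := by rw [hs]; ring
    subst ht2
    have hs0 : 0 < s := by linarith
    have hbeq : b = ρ * a - s * σ := by linarith
    have hsa : s * σ ≤ (-a) * (1 - ρ) := by nlinarith [hbeq, hab]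
    have ha2 := step_ha2 ρ σ s a hσsq hρlb hρub hσpos hs0 hsa
    have hs2 : s^2 ≤ 1.7689 := by
      refine step_hs2 ρ σ s hσsq hρlb hρub hσpos hs0 ?_
      nlinarith [mul_le_mul_of_nonneg_left hab hρpos.le,
        mul_le_mul_of_nonneg_right (show -b ≤ 2 by linarith) (show (0:ℝ) ≤ 1 - ρ by linarith)]
    have hP : 0 ≤ s - s^3/6 + s^5/40 := step_hP s hs0.le hs2
    have hΦ : 1/2 - 0.399 * (s - s^3/6 + s^5/40) ≤ stdNormalCDF (-s) := by
      have h1 := cdf_lower s hs0.le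
      refine le_trans ?_ h1
      have h2 := mul_le_mul_of_nonneg_right inv_sqrt2pi_le hP
      linarith
    have hDa := step_hDa a
    have hDD := step_hDD s a ha2
    have hE2D : Real.exp (-a^2/2) * (1 + 1.13*s^2 + 0.638*s^4) ≤ 1 := by
      have := mul_le_mul_of_nonneg_left hDD hE2pos.le
      linarith
    have hkey := key_poly s hs0.le hs2
    have hDpos : (0:ℝ) < 1 + 1.13*s^2 + 0.638*s^4 := by positivity
    have hL0 : 0 ≤ 1/2 - 0.399*(s - s^3/6 + s^5/40) := by
      by_contra h
      push_neg at h
      have := mul_neg_of_neg_of_pos h hDpos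
      linarith
    have hEs : Real.exp (-(-s)^2/2) ≤ 1 := by
      rw [Real.exp_le_one_iff]
      linarith [sq_nonneg s]
    have hrhs : (1 / (2 * ρ)) * ((2 * Real.pi * σ)⁻¹ * (Real.exp (-(-s)^2/2) * Real.exp (-a^2/2)))
        ≤ 1/2 - 0.399*(s - s^3/6 + s^5/40) := by
      have step1 : (1 / (2 * ρ)) * ((2 * Real.pi * σ)⁻¹ * (Real.exp (-(-s)^2/2) * Real.exp (-a^2/2)))
          ≤ 0.223 * Real.exp (-a^2/2) := by
        rw [← mul_assoc]
        calc ((1 / (2 * ρ)) * (2 * Real.pi * σ)⁻¹) * (Real.exp (-(-s)^2/2) * Real.exp (-a^2/2))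
            ≤ ((1 / (2 * ρ)) * (2 * Real.pi * σ)⁻¹) * Real.exp (-a^2/2) := by
              apply mul_le_mul_of_nonneg_left ?_ hcpos.le
              have := mul_le_mul_of_nonneg_right hEs hE2pos.le
              linarith
          _ ≤ 0.223 * Real.exp (-a^2/2) := mul_le_mul_of_nonneg_right hcle hE2pos.le
      have step2 : 0.223 * Real.exp (-a^2/2)
          ≤ ((1/2 - 0.399*(s - s^3/6 + s^5/40)) * (1 + 1.13*s^2 + 0.638*s^4)) * Real.exp (-a^2/2) :=
        mul_le_mul_of_nonneg_right hkey hE2pos.le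
      have step3 : ((1/2 - 0.399*(s - s^3/6 + s^5/40)) * (1 + 1.13*s^2 + 0.638*s^4)) * Real.exp (-a^2/2)
          ≤ (1/2 - 0.399*(s - s^3/6 + s^5/40)) * 1 := by
        rw [mul_assoc]
        apply mul_le_mul_of_nonneg_left ?_ hL0
        linarith [hE2D]
      calc _ ≤ 0.223 * Real.exp (-a^2/2) := step1
        _ ≤ _ := step2
        _ ≤ (1/2 - 0.399*(s - s^3/6 + s^5/40)) * 1 := step3
        _ = 1/2 - 0.399*(s - s^3/6 + s^5/40) := mul_one _
    exact le_trans hrhs hΦ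


set_option maxHeartbeats 1000000 in
/-- Let r ∈ (0.15, 0.85), α ∈ (0,1), β ∈ (0.03, 0.5) with α ≤ β,
and set a = Φ⁻¹(α), b = Φ⁻¹(β). Then
Φ((b − √r·a)/√(1−r)) ≥ (1/(2√r))·φ₂(a, b; √r); equivalently, the local
prediction-access ratio satisfies lim_{Δ→0} PAR(α, β, Δ) ≥ 1. -/
theorem local_PAR_ge_one_case1 (r α β : ℝ)
    (hr : r ∈ Set.Ioo (0.15 : ℝ) 0.85) (hα : α ∈ Set.Ioo (0 : ℝ) 1)
    (hβ : β ∈ Set.Ioo (0.03 : ℝ) 0.5) (hαβ : α ≤ β)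
    (a b : ℝ) (ha : a = stdNormalCDFInv α) (hb : b = stdNormalCDFInv β) :
    stdNormalCDF ((b - Real.sqrt r * a) / Real.sqrt (1 - r)) ≥
      (1 / (2 * Real.sqrt r)) * biNormalPDF a b (Real.sqrt r) := by
  obtain ⟨hr1, hr2⟩ := hr
  obtain ⟨hα1, hα2⟩ := hα
  obtain ⟨hβ1, hβ2⟩ := hβ
  norm_num at hr1 hr2 hβ1 hβ2
  have hΦa : stdNormalCDF a = α := by
    rw [ha]; exact Function.invFun_eq (cdf_surjOn α hα1 (by linarith))
  have hΦb : stdNormalCDF b = β := by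
    rw [hb]; exact Function.invFun_eq (cdf_surjOn β (by linarith) (by linarith))
  have hb0 : b < 0 := by
    by_contra h
    push_neg at h
    have := cdf_mono.monotone h
    rw [cdf_zero, hΦb] at this
    linarith
  have hb2 : -2 < b := by
    by_contra h
    push_neg at h
    have h2 := cdf_mono.monotone h
    rw [hΦb] at h2
    have := cdf_neg_two
    linarith
  have hab : a ≤ b := by
    by_contra h
    push_neg at h
    have := cdf_mono h
    rw [hΦa, hΦb] at this
    linarith
  have hρsq : (Real.sqrt r)^2 = r := Real.sq_sqrt (by linarith)
  have hσsq : (Real.sqrt (1-r))^2 = 1 - r := Real.sq_sqrt (by linarith)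
  have hρpos : 0 < Real.sqrt r := Real.sqrt_pos.2 (by linarith)
  have hσpos : 0 < Real.sqrt (1-r) := Real.sqrt_pos.2 (by linarith)
  have hρlb : 0.387 ≤ Real.sqrt r := by nlinarith
  have hρub : Real.sqrt r ≤ 0.93 := by nlinarith
  have hρσ : 0.357 ≤ Real.sqrt r * Real.sqrt (1-r) := by
    nlinarith [mul_pos hρpos hσpos, sq_nonneg (Real.sqrt r * Real.sqrt (1-r) - 0.357)]
  have hσsq2 : (Real.sqrt (1-r))^2 = 1 - (Real.sqrt r)^2 := by rw [hρsq, hσsq]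
  have h9 : a^2 - 2*(Real.sqrt r)*a*b + b^2
      = (b - (Real.sqrt r)*a)^2 + a^2*(Real.sqrt (1-r))^2 := by
    linear_combination (-a^2) * hσsq2
  have hexp : -(a^2 - 2*(Real.sqrt r)*a*b + b^2)/(2*(1-(Real.sqrt r)^2))
      = -(((b - (Real.sqrt r)*a)/(Real.sqrt (1-r))))^2/2 + -a^2/2 := by
    rw [← hσsq2, h9, div_pow]
    field_simp
    ring
  have hbi : biNormalPDF a b (Real.sqrt r) =
      (2 * Real.pi * Real.sqrt (1-r))⁻¹ *
        (Real.exp (-(((b - (Real.sqrt r)*a)/(Real.sqrt (1-r))))^2/2) * Real.exp (-a^2/2)) := by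
    unfold biNormalPDF
    rw [← Real.exp_add]
    rw [show Real.sqrt (1 - (Real.sqrt r)^2) = Real.sqrt (1-r) from by rw [hρsq]]
    rw [hexp]
  rw [hbi]
  exact main_est (Real.sqrt r) (Real.sqrt (1-r)) a b hσsq2 hρlb hρub hρσ hρpos hσpos hab hb0 hb2
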